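/- arXiv:1809.02061 — 8 statements merged into one kernel-verified Lean document; each statement's English description precedes it below -/
import Mathlib

section
/- For every α > 0 the quasi-optimality function is bounded by the error functional: ψ_Q(α) ≤ e1(α), i.e. α‖(αI + A*A)^{-2} A* f‖ ≤ ‖u_α^+ − u_*‖ + ‖u_α − u_α^+‖. -/
open MeasureTheory
open scoped RealInnerProductSpace

noncomputable section

variable {H F : Type*} [NormedAddCommGroup H] [InnerProductSpace ℝ H] [CompleteSpace H]
  [NormedAddCommGroup F] [InnerProductSpace ℝ F] [CompleteSpace F]

/-- The inverse `(α I + A* A)⁻¹` (as `Ring.inverse`; for `α > 0` the operator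
`α I + A* A` is boundedly invertible, so `Ring.inverse` is its genuine inverse). -/
def tikInv (A : H →L[ℝ] F) (α : ℝ) : H →L[ℝ] H :=
  Ring.inverse (α • (1 : H →L[ℝ] H) + (ContinuousLinearMap.adjoint A).comp A)

/-- Tikhonov approximation `u_α = (α I + A* A)⁻¹ A* f`. -/
def tikSol (A : H →L[ℝ] F) (f : F) (α : ℝ) : H :=
  tikInv A α (ContinuousLinearMap.adjoint A f)

/-- Quasi-optimality function `ψ_Q(α) = α ‖(α I + A* A)⁻² A* f‖`. -/
def psiQ (A : H →L[ℝ] F) (f : F) (α : ℝ) : ℝ :=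
  α * ‖(tikInv A α ^ 2) (ContinuousLinearMap.adjoint A f)‖

/-- Error functional `e1(α) = ‖u_α⁺ - u_*‖ + ‖u_α - u_α⁺‖`. -/
def e1 (A : H →L[ℝ] F) (f fstar : F) (ustar : H) (α : ℝ) : ℝ :=
  ‖tikSol A fstar α - ustar‖ + ‖tikSol A f α - tikSol A fstar α‖

/-- Error functional `e2(α, δ) = ‖u_α⁺ - u_*‖ + δ/(2 √α)`. -/
def e2 (A : H →L[ℝ] F) (fstar : F) (ustar : H) (δ α : ℝ) : ℝ :=
  ‖tikSol A fstar α - ustar‖ + δ / (2 * Real.sqrt α)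

/-- Modified discrepancy `d_MD(α) = ‖B_α (A u_α - f)‖` where
`B_α = α^{1/2} (α I + A A*)^{-1/2}`; since `B_α` is positive and selfadjoint,
`‖B_α w‖² = α ⟪(α I + A A*)⁻¹ w, w⟫`, which is used as the definition. -/
def dMD (A : H →L[ℝ] F) (f : F) (α : ℝ) : ℝ :=
  Real.sqrt (α * ⟪(Ring.inverse (α • (1 : F →L[ℝ] F) + A.comp (ContinuousLinearMap.adjoint A)))
      (A (tikSol A f α) - f), A (tikSol A f α) - f⟫)

/-- `k` is a local minimum point of `j ↦ ψ(α_j)` on the grid `j = 0, …, N`: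
either `k ≤ N - 1`, `ψ k < ψ (k+1)` and (`k = 0` or there is `j ≥ 1` with
`ψ k = ψ (k-1) = ⋯ = ψ (k-j+1) < ψ (k-j)`); or `k = N` and there is `j ≥ 1` with
`ψ N = ⋯ = ψ (N-j+1) < ψ (N-j)`. -/
def IsLocMinIdx (ψ : ℕ → ℝ) (N k : ℕ) : Prop :=
  (k < N ∧ ψ k < ψ (k + 1) ∧
    (k = 0 ∨ ∃ j, 1 ≤ j ∧ j ≤ k ∧ (∀ i, k - j < i → i ≤ k → ψ i = ψ k) ∧ ψ k < ψ (k - j)))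
  ∨ (k = N ∧ ∃ j, 1 ≤ j ∧ j ≤ N ∧ (∀ i, N - j < i → i ≤ N → ψ i = ψ N) ∧ ψ N < ψ (N - j))

/-- for every `α > 0`, `ψ_Q(α) ≤ e1(α)`. -/
theorem psiQ_le_e1 (A : H →L[ℝ] F) (f fstar : F) (ustar : H) (hA : A ustar = fstar)
    (α : ℝ) (hα : 0 < α) :
    psiQ A f α ≤ e1 A f fstar ustar α := by
  classical
  set S : H →L[ℝ] H := (ContinuousLinearMap.adjoint A).comp A with hS
  set T : H →L[ℝ] H := α • (1 : H →L[ℝ] H) + S with hT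
  have htik : tikInv A α = Ring.inverse T := rfl
  by_cases h : IsUnit T
  · set B : H →L[ℝ] H := Ring.inverse T with hB
    have hBT : B * T = 1 := Ring.inverse_mul_cancel T h
    have hTB : T * B = 1 := Ring.mul_inverse_cancel T h
    -- pointwise norm bounds
    have key : ∀ v : H, ‖α • B v‖ ≤ ‖v‖ ∧ ‖S (B v)‖ ≤ ‖v‖ := by
      intro v
      set w := B v with hw
      have hTw : T w = v := by
        have := congrArg (fun (C : H →L[ℝ] H) => C v) hTB
        simpa [ContinuousLinearMap.mul_apply] using this
      have hv : v = α • w + S w := by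
        rw [← hTw, hT]; simp [ContinuousLinearMap.add_apply]
      have hinner : ⟪α • w, S w⟫ = α * ‖A w‖ ^ 2 := by
        rw [hS, real_inner_smul_left]
        simp only [ContinuousLinearMap.coe_comp', Function.comp_apply]
        rw [ContinuousLinearMap.adjoint_inner_right]
        rw [real_inner_self_eq_norm_sq]
      have hsq : ‖v‖ ^ 2 = ‖α • w‖ ^ 2 + 2 * (α * ‖A w‖ ^ 2) + ‖S w‖ ^ 2 := by
        rw [hv, ← hinner, norm_add_sq_real]
      have h1 : ‖α • w‖ ^ 2 ≤ ‖v‖ ^ 2 := by nlinarith [norm_nonneg (A w), norm_nonneg (S w), sq_nonneg (‖A w‖), sq_nonneg (‖S w‖), hα.le, mul_nonneg hα.le (sq_nonneg ‖A w‖)]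
      have h2 : ‖S w‖ ^ 2 ≤ ‖v‖ ^ 2 := by nlinarith [sq_nonneg (‖α • w‖), mul_nonneg hα.le (sq_nonneg ‖A w‖)]
      constructor
      · have := Real.sqrt_le_sqrt h1
        rwa [Real.sqrt_sq (norm_nonneg _), Real.sqrt_sq (norm_nonneg _)] at this
      · have := Real.sqrt_le_sqrt h2
        rwa [Real.sqrt_sq (norm_nonneg _), Real.sqrt_sq (norm_nonneg _)] at this
    -- commutation : B * S = S * B
    have hTS : T * S = S * T := by
      rw [hT]; simp [add_mul, mul_add, smul_mul_assoc, mul_smul_comm]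
    have hBS : ∀ x : H, B (S x) = S (B x) := by
      have hcomm : B * S = S * B := by
        calc B * S = B * S * (T * B) := by rw [hTB, mul_one]
        _ = B * (S * T) * B := by simp [mul_assoc]
        _ = B * (T * S) * B := by rw [hTS]
        _ = (B * T) * (S * B) := by simp [mul_assoc]
        _ = S * B := by rw [hBT, one_mul]
      intro x
      have := congrArg (fun (C : H →L[ℝ] H) => C x) hcomm
      simpa [ContinuousLinearMap.mul_apply] using this
    -- α • B x + B (S x) = x
    have hres : ∀ x : H, α • B x + B (S x) = x := by
      have hid : α • B + B * S = 1 := by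
        calc α • B + B * S = B * (α • 1 + S) := by
              rw [mul_add]; simp [mul_smul_comm]
        _ = 1 := by rw [← hT, hBT]
      intro x
      have := congrArg (fun (C : H →L[ℝ] H) => C x) hid
      simpa [ContinuousLinearMap.mul_apply, ContinuousLinearMap.add_apply] using this
    set uα : H := tikSol A f α with huα
    set up : H := tikSol A fstar α with hup
    have hupS : up = B (S ustar) := by
      rw [hup, tikSol, htik, hS]
      simp [hA]
    -- identity : α • B uα = α • B (uα - up) + (α • B (up - ustar) - (up - ustar))
    have hid2 : α • B uα = α • B (uα - up) + (α • B (up - ustar) - (up - ustar)) := by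
      have h3 : α • B ustar = ustar - up := by
        have := hres ustar
        rw [hupS]; linear_combination (norm := module) this
      have hBsub : B (uα - up) = B uα - B up := map_sub B uα up
      have hBsub2 : B (up - ustar) = B up - B ustar := map_sub B up ustar
      rw [hBsub, hBsub2, smul_sub, smul_sub, h3]
      module
    -- conclude
    have hpsi : psiQ A f α = ‖α • B uα‖ := by
      have h2 : (tikInv A α ^ 2) (ContinuousLinearMap.adjoint A f) = B uα := by
        rw [htik, sq, huα, tikSol, htik]
        simp [ContinuousLinearMap.mul_apply]
      rw [psiQ, h2, norm_smul, Real.norm_of_nonneg hα.le]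
    rw [hpsi, hid2, e1, ← huα, ← hup]
    have b1 : ‖α • B (uα - up)‖ ≤ ‖uα - up‖ := (key _).1
    have b2 : ‖α • B (up - ustar) - (up - ustar)‖ ≤ ‖up - ustar‖ := by
      have hx := hres (up - ustar)
      have : α • B (up - ustar) - (up - ustar) = -(B (S (up - ustar))) := by
        linear_combination (norm := module) hx
      rw [this, norm_neg, hBS]
      exact (key _).2
    calc ‖α • B (uα - up) + (α • B (up - ustar) - (up - ustar))‖
        ≤ ‖α • B (uα - up)‖ + ‖α • B (up - ustar) - (up - ustar)‖ := norm_add_le _ _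
      _ ≤ ‖uα - up‖ + ‖up - ustar‖ := add_le_add b1 b2
      _ = ‖up - ustar‖ + ‖uα - up‖ := by ring
  · have hz : tikInv A α = 0 := by
      rw [htik, Ring.inverse_non_unit _ h]
    have : psiQ A f α = 0 := by
      simp [psiQ, hz]
    rw [this, e1]
    positivity
end
end

section
/- For every α > 0 and every fixed q ∈ (0,1), the difference-quotient quasi-optimality function satisfies ψ_QD(α) ≤ q^{-1} e1(α), i.e. (1−q)^{-1}‖u_α − u_{qα}‖ ≤ q^{-1}(‖u_α^+ − u_*‖ + ‖u_α − u_α^+‖). -/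
open MeasureTheory
open scoped RealInnerProductSpace

noncomputable section

variable {H F : Type*} [NormedAddCommGroup H] [InnerProductSpace ℝ H] [CompleteSpace H]
  [NormedAddCommGroup F] [InnerProductSpace ℝ F] [CompleteSpace F]

/-!
By the resolvent identity, `u_α - u_{qα} = -(1 - q) α (qα + A*A)⁻¹ u_α`. Since `A*A` is positive,
`qα ‖(qα + A*A)⁻¹‖ ≤ 1` and `‖(qα + A*A)⁻¹ A*A‖ ≤ 1`. Writing `u_α = (u_α - u_α⁺) + u_α⁺` and using
`α u_α⁺ = A*A (u_* - u_α⁺)` (the normal equation for exact data `A u_*`), the first summand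
contributes at most `q⁻¹ ‖u_α - u_α⁺‖` and the second at most `‖u_α⁺ - u_*‖`.
-/

theorem Ring.inverse_smul_one_add_sub {R A : Type*} [CommRing R] [Ring A] [Algebra R A]
    {a : A} {β γ : R} (h : IsUnit (β • 1 + a) ↔ IsUnit (γ • 1 + a)) :
    Ring.inverse (β • 1 + a) - Ring.inverse (γ • 1 + a) =
      (γ - β) • (Ring.inverse (γ • 1 + a) * Ring.inverse (β • 1 + a)) := by
  rw [← neg_sub, Ring.inverse_sub_inverse h.symm, add_sub_add_right_eq_sub, ← sub_smul,
    mul_smul_one, smul_mul_assoc, ← neg_smul, neg_sub]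

namespace IsUnit

variable {R M : Type*} [Semiring R] [TopologicalSpace M] [AddCommMonoid M] [Module R M]
  {U : M →L[R] M}

theorem apply_ringInverse_apply (hU : IsUnit U) (x : M) : U (Ring.inverse U x) = x := by
  rw [← mul_apply_eq_comp, Ring.mul_inverse_cancel U hU, one_apply_eq_self]

end IsUnit

namespace ContinuousLinearMap

variable {E : Type*} [NormedAddCommGroup E] [InnerProductSpace ℝ E] {T : E →L[ℝ] E}

theorem smul_ringInverse_apply_eq_apply_sub {β : ℝ} (hU : IsUnit (β • 1 + T)) (z : E) :
    β • Ring.inverse (β • 1 + T) (T z) = T (z - Ring.inverse (β • 1 + T) (T z)) := by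
  set u := Ring.inverse (β • 1 + T) (T z)
  have hu : β • u + T u = T z := hU.apply_ringInverse_apply (T z)
  rw [map_sub, ← hu]
  abel

namespace IsPositive

theorem mul_norm_sq_le_inner_smul_one_add (hT : T.IsPositive) (β : ℝ) (x : E) :
    β * ‖x‖ ^ 2 ≤ ⟪(β • 1 + T) x, x⟫ := by
  rw [add_apply, inner_add_left, smul_apply, one_apply_eq_self, real_inner_smul_left,
    real_inner_self_eq_norm_sq]
  linarith [hT.inner_nonneg_left x]

theorem mul_norm_le_norm_smul_one_add_apply (hT : T.IsPositive) (β : ℝ) (x : E) :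
    β * ‖x‖ ≤ ‖(β • 1 + T) x‖ := by
  rcases (norm_nonneg x).eq_or_lt with hx | hx
  · rw [← hx, mul_zero]
    exact norm_nonneg _
  · refine le_of_mul_le_mul_right ?_ hx
    calc β * ‖x‖ * ‖x‖ = β * ‖x‖ ^ 2 := by ring
      _ ≤ ⟪(β • 1 + T) x, x⟫ := hT.mul_norm_sq_le_inner_smul_one_add β x
      _ ≤ ‖(β • 1 + T) x‖ * ‖x‖ := real_inner_le_norm _ _

theorem norm_apply_le_norm_smul_one_add_apply (hT : T.IsPositive) {β : ℝ} (hβ : 0 ≤ β) (x : E) :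
    ‖T x‖ ≤ ‖(β • 1 + T) x‖ := by
  have hcross : 0 ≤ ⟪β • x, T x⟫ := by
    rw [real_inner_smul_left, real_inner_comm]
    exact mul_nonneg hβ (hT.inner_nonneg_left x)
  have hsq : ‖T x‖ ^ 2 ≤ ‖(β • 1 + T) x‖ ^ 2 := by
    rw [add_apply, smul_apply, one_apply_eq_self, norm_add_sq_real]
    nlinarith [sq_nonneg ‖β • x‖]
  exact (pow_le_pow_iff_left₀ (norm_nonneg _) (norm_nonneg _) two_ne_zero).1 hsq

variable [CompleteSpace E]

theorem isUnit_smul_one_add (hT : T.IsPositive) {β : ℝ} (hβ : 0 < β) : IsUnit (β • 1 + T) :=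
  isUnit_of_forall_le_norm_inner_map _ (c := ⟨β, hβ.le⟩) hβ fun x => calc
    ‖x‖ ^ 2 * β = β * ‖x‖ ^ 2 := mul_comm _ _
    _ ≤ ⟪(β • 1 + T) x, x⟫ := hT.mul_norm_sq_le_inner_smul_one_add β x
    _ ≤ ‖⟪(β • 1 + T) x, x⟫‖ := Real.le_norm_self _

theorem mul_norm_ringInverse_apply_le (hT : T.IsPositive) {β : ℝ} (hβ : 0 < β) (x : E) :
    β * ‖Ring.inverse (β • 1 + T) x‖ ≤ ‖x‖ := by
  simpa only [(hT.isUnit_smul_one_add hβ).apply_ringInverse_apply] using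
    hT.mul_norm_le_norm_smul_one_add_apply β (Ring.inverse (β • 1 + T) x)

theorem norm_ringInverse_apply_apply_le (hT : T.IsPositive) {β : ℝ} (hβ : 0 < β) (x : E) :
    ‖Ring.inverse (β • 1 + T) (T x)‖ ≤ ‖x‖ := by
  have hU := hT.isUnit_smul_one_add hβ
  have hcomm : Commute T (Ring.inverse (β • 1 + T)) := by
    rw [← hU.unit_spec, Ring.inverse_unit]
    refine Commute.units_inv_right ?_
    rw [hU.unit_spec]
    exact ((Commute.one_right T).smul_right β).add_right (Commute.refl T)
  calc ‖Ring.inverse (β • 1 + T) (T x)‖ = ‖T (Ring.inverse (β • 1 + T) x)‖ := by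
        rw [← mul_apply_eq_comp, ← hcomm.eq, mul_apply_eq_comp]
    _ ≤ ‖(β • 1 + T) (Ring.inverse (β • 1 + T) x)‖ :=
        hT.norm_apply_le_norm_smul_one_add_apply hβ.le _
    _ = ‖x‖ := by rw [hU.apply_ringInverse_apply]

end IsPositive

end ContinuousLinearMap

/-- for every `α > 0` and `q ∈ (0,1)`,
`ψ_QD(α) = (1-q)⁻¹ ‖u_α - u_{qα}‖ ≤ q⁻¹ e1(α)`. -/
theorem psiQD_le_inv_q_mul_e1 (A : H →L[ℝ] F) (f fstar : F) (ustar : H)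
    (hA : A ustar = fstar) (q : ℝ) (hq : q ∈ Set.Ioo (0 : ℝ) 1) (α : ℝ) (hα : 0 < α) :
    (1 - q)⁻¹ * ‖tikSol A f α - tikSol A f (q * α)‖ ≤ q⁻¹ * e1 A f fstar ustar α := by
  subst hA
  obtain ⟨hq0, hq1⟩ := hq
  have hqα : 0 < q * α := mul_pos hq0 hα
  set S := ContinuousLinearMap.adjoint A ∘L A
  have hS : S.IsPositive := ContinuousLinearMap.isPositive_adjoint_comp_self A
  set R := Ring.inverse ((q * α) • 1 + S)
  set u := tikSol A f α
  set uplus := tikSol A (A ustar) α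
  have hdiff : u - tikSol A f (q * α) = -(((1 - q) * α) • R u) := by
    change (Ring.inverse (α • 1 + S) - R) (ContinuousLinearMap.adjoint A f) = _
    rw [Ring.inverse_smul_one_add_sub (by simp [hS.isUnit_smul_one_add, hα, hqα]), smul_apply,
      mul_apply_eq_comp, ← neg_smul]
    congr 1
    ring
  have huplus : α • uplus = S (ustar - uplus) :=
    ContinuousLinearMap.smul_ringInverse_apply_eq_apply_sub (hS.isUnit_smul_one_add hα) ustar
  have hsplit : α • R u = α • R (u - uplus) + R (S (ustar - uplus)) := by
    rw [← huplus, map_smul, map_sub, smul_sub, sub_add_cancel]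
  calc (1 - q)⁻¹ * ‖u - tikSol A f (q * α)‖ = ‖α • R u‖ := by
        rw [hdiff, norm_neg, norm_smul, norm_smul, Real.norm_of_nonneg (by nlinarith),
          Real.norm_of_nonneg hα.le, mul_assoc, inv_mul_cancel_left₀ (by linarith)]
    _ ≤ ‖α • R (u - uplus)‖ + ‖R (S (ustar - uplus))‖ := hsplit ▸ norm_add_le _ _
    _ ≤ q⁻¹ * ‖u - uplus‖ + ‖uplus - ustar‖ := by
        gcongr
        · rw [norm_smul, Real.norm_of_nonneg hα.le, ← inv_mul_cancel_left₀ hq0.ne' α, mul_assoc]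
          gcongr
          exact hS.mul_norm_ringInverse_apply_le hqα _
        · rw [norm_sub_rev uplus]
          exact hS.norm_ringInverse_apply_apply_le hqα _
    _ ≤ q⁻¹ * e1 A f (A ustar) ustar α := by
        rw [e1, mul_add, add_comm]
        gcongr
        exact le_mul_of_one_le_left (norm_nonneg _) (one_le_inv₀ hq0 |>.2 hq1.le)
end
end

section
/- Let q ∈ (0,1). For any α > 0 and any α' with qα ≤ α' ≤ α, one has e1(α') ≤ q^{-1} e1(α). -/
/-! With `R_β = (β I + A* A)⁻¹` one has `u_β⁺ - u_* = -β R_β u_*` and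
`u_β - u_β⁺ = R_β A* (f - f_*)`. The resolvent identity `R_α' = R_α + (α - α') R_α' R_α` and
`‖R_α'‖ ≤ 1 / α'` give `α' ‖R_α' y‖ ≤ α ‖R_α y‖`, which bounds the first term of `e1(α')` by
that of `e1(α)` and the second by `α / α' ≤ q⁻¹` times that of `e1(α)`. -/

open MeasureTheory
open scoped RealInnerProductSpace

noncomputable section

variable {H F : Type*} [NormedAddCommGroup H] [InnerProductSpace ℝ H] [CompleteSpace H]
  [NormedAddCommGroup F] [InnerProductSpace ℝ F] [CompleteSpace F]

namespace ContinuousLinearMap.IsPositive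

variable {E : Type*} [NormedAddCommGroup E] [InnerProductSpace ℝ E] {T : E →L[ℝ] E}

variable [CompleteSpace E]

theorem smul_one_add_apply_inverse (hT : T.IsPositive) {β : ℝ} (hβ : 0 < β) (y : E) :
    (β • 1 + T) (Ring.inverse (β • 1 + T) y) = y := by
  simpa using congrArg (· y) (Ring.mul_inverse_cancel _ (hT.isUnit_smul_one_add hβ))

theorem inverse_smul_one_add_apply_apply (hT : T.IsPositive) {β : ℝ} (hβ : 0 < β) (x : E) :
    Ring.inverse (β • 1 + T) ((β • 1 + T) x) = x := by
  simpa using congrArg (· x) (Ring.inverse_mul_cancel _ (hT.isUnit_smul_one_add hβ))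

theorem mul_norm_inverse_smul_one_add_apply_le (hT : T.IsPositive) {β : ℝ} (hβ : 0 < β) (y : E) :
    β * ‖Ring.inverse (β • 1 + T) y‖ ≤ ‖y‖ := by
  set x := Ring.inverse (β • 1 + T) y
  have hxy : β * ‖x‖ * ‖x‖ ≤ ‖y‖ * ‖x‖ := by
    calc β * ‖x‖ * ‖x‖ = β * ‖x‖ ^ 2 := by ring
      _ ≤ ⟪(β • 1 + T) x, x⟫ := hT.mul_norm_sq_le_inner_smul_one_add β x
      _ = ⟪y, x⟫ := by rw [hT.smul_one_add_apply_inverse hβ]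
      _ ≤ ‖y‖ * ‖x‖ := real_inner_le_norm y x
  rcases (norm_nonneg x).eq_or_lt with hx | hx
  · simp [← hx]
  · exact le_of_mul_le_mul_right hxy hx

theorem mul_norm_inverse_smul_one_add_apply_mono (hT : T.IsPositive) {α α' : ℝ} (hα' : 0 < α')
    (hle : α' ≤ α) (y : E) :
    α' * ‖Ring.inverse (α' • 1 + T) y‖ ≤ α * ‖Ring.inverse (α • 1 + T) y‖ := by
  set R' := Ring.inverse (α' • 1 + T)
  set R := Ring.inverse (α • 1 + T)
  have hresolvent : R' y = R y + (α - α') • R' (R y) := by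
    have h := Ring.inverse_sub_inverse (a := α' • 1 + T) (b := α • 1 + T)
      (iff_of_true (hT.isUnit_smul_one_add hα') (hT.isUnit_smul_one_add (hα'.trans_le hle)))
    rw [add_sub_add_right_eq_sub, ← sub_smul, mul_smul_one, sub_eq_iff_eq_add'] at h
    simpa using congrArg (· y) h
  have hR' := hT.mul_norm_inverse_smul_one_add_apply_le hα' (R y)
  calc α' * ‖R' y‖ ≤ α' * (‖R y‖ + (α - α') * ‖R' (R y)‖) := by
        rw [hresolvent]
        gcongr
        refine (norm_add_le _ _).trans_eq ?_
        rw [norm_smul, Real.norm_of_nonneg (sub_nonneg.mpr hle)]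
    _ ≤ α * ‖R y‖ := by nlinarith

end ContinuousLinearMap.IsPositive

theorem norm_tikSol_sub_of_apply_eq {A : H →L[ℝ] F} {fstar : F} {ustar : H} (hA : A ustar = fstar)
    {β : ℝ} (hβ : 0 < β) : ‖tikSol A fstar β - ustar‖ = β * ‖tikInv A β ustar‖ := by
  set T := (ContinuousLinearMap.adjoint A).comp A
  have hdata : ContinuousLinearMap.adjoint A fstar = (β • 1 + T) ustar - β • ustar := by
    simp [T, ← hA]
  rw [tikSol, tikInv, hdata, map_sub, map_smul,
    (ContinuousLinearMap.isPositive_adjoint_comp_self A).inverse_smul_one_add_apply_apply hβ,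
    sub_sub_cancel_left, norm_neg, norm_smul, Real.norm_of_nonneg hβ.le]

theorem tikSol_sub_tikSol (A : H →L[ℝ] F) (f f' : F) (β : ℝ) :
    tikSol A f β - tikSol A f' β = tikInv A β (ContinuousLinearMap.adjoint A (f - f')) := by
  simp [tikSol, map_sub]

theorem mul_norm_tikInv_apply_mono (A : H →L[ℝ] F) {α α' : ℝ} (hα' : 0 < α') (hle : α' ≤ α)
    (y : H) : α' * ‖tikInv A α' y‖ ≤ α * ‖tikInv A α y‖ :=
  (ContinuousLinearMap.isPositive_adjoint_comp_self A).mul_norm_inverse_smul_one_add_apply_mono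
    hα' hle y

/-- for `q ∈ (0,1)`, `α > 0` and `qα ≤ α' ≤ α`, `e1(α') ≤ q⁻¹ e1(α)`. -/
theorem e1_le_inv_q_mul_e1 (A : H →L[ℝ] F) (f fstar : F) (ustar : H)
    (hA : A ustar = fstar) (q : ℝ) (hq : q ∈ Set.Ioo (0 : ℝ) 1)
    (α α' : ℝ) (hα : 0 < α) (h1 : q * α ≤ α') (h2 : α' ≤ α) :
    e1 A f fstar ustar α' ≤ q⁻¹ * e1 A f fstar ustar α := by
  obtain ⟨hq0, hq1⟩ := hq
  have hα' : 0 < α' := (mul_pos hq0 hα).trans_le h1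
  set g := ContinuousLinearMap.adjoint A (f - fstar)
  have hbias := mul_norm_tikInv_apply_mono A hα' h2 ustar
  have hnoise : ‖tikInv A α' g‖ ≤ q⁻¹ * ‖tikInv A α g‖ := by
    have hmono := mul_norm_tikInv_apply_mono A hα' h2 g
    calc ‖tikInv A α' g‖ ≤ α / α' * ‖tikInv A α g‖ := by
          rw [div_mul_eq_mul_div, le_div_iff₀ hα']; linarith
      _ ≤ q⁻¹ * ‖tikInv A α g‖ := by
          gcongr
          rwa [div_le_iff₀ hα', le_inv_mul_iff₀ hq0]
  have hq_ge : 1 ≤ q⁻¹ := (one_le_inv₀ hq0).mpr hq1.le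
  rw [e1, e1, norm_tikSol_sub_of_apply_eq hA hα', norm_tikSol_sub_of_apply_eq hA hα,
    tikSol_sub_tikSol, tikSol_sub_tikSol]
  calc α' * ‖tikInv A α' ustar‖ + ‖tikInv A α' g‖
      ≤ α * ‖tikInv A α ustar‖ + q⁻¹ * ‖tikInv A α g‖ := add_le_add hbias hnoise
    _ ≤ q⁻¹ * (α * ‖tikInv A α ustar‖ + ‖tikInv A α g‖) := by
        rw [mul_add]
        exact add_le_add_left (le_mul_of_one_le_left (by positivity) hq_ge) _
end
end

section
/- On the geometric grid α_j = α_0 q^j (j = 0,…,N) the discrete minimum of e1 is at most q^{-1} times the continuous minimum: min_{0 ≤ j ≤ N} e1(α_j) ≤ q^{-1} · inf_{α_N ≤ α ≤ α_0} e1(α). -/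
open MeasureTheory
open scoped RealInnerProductSpace

set_option synthInstance.maxHeartbeats 1000000
set_option maxHeartbeats 1000000

noncomputable section

variable {H F : Type*} [NormedAddCommGroup H] [InnerProductSpace ℝ H] [CompleteSpace H]
  [NormedAddCommGroup F] [InnerProductSpace ℝ F] [CompleteSpace F]

section TikAux

open ContinuousLinearMap

/-- abbreviation for the Tikhonov operator -/
private def tikB (A : H →L[ℝ] F) (α : ℝ) : H →L[ℝ] H :=
  α • (1 : H →L[ℝ] H) + (ContinuousLinearMap.adjoint A).comp A

private lemma tikInv_eq (A : H →L[ℝ] F) (α : ℝ) : tikInv A α = Ring.inverse (tikB A α) := rfl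

private lemma inner_tikB (A : H →L[ℝ] F) (α : ℝ) (x : H) :
    ⟪tikB A α x, x⟫ = α * ‖x‖ ^ 2 + ‖A x‖ ^ 2 := by
  simp [tikB, inner_add_left, real_inner_smul_left, real_inner_self_eq_norm_sq,
    ContinuousLinearMap.adjoint_inner_left]

private lemma isUnit_tikB (A : H →L[ℝ] F) {α : ℝ} (hα : 0 < α) : IsUnit (tikB A α) := by
  apply ContinuousLinearMap.isUnit_of_forall_le_norm_inner_map _ (c := ⟨α, hα.le⟩)
    (by exact_mod_cast hα)
  intro x
  have h := inner_tikB A α x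
  have : ‖x‖ ^ 2 * α ≤ ⟪tikB A α x, x⟫ := by rw [h]; nlinarith [sq_nonneg ‖A x‖]
  calc ‖x‖ ^ 2 * (⟨α, hα.le⟩ : NNReal) = ‖x‖ ^ 2 * α := rfl
    _ ≤ ⟪tikB A α x, x⟫ := this
    _ ≤ ‖(⟪tikB A α x, x⟫ : ℝ)‖ := le_abs_self _

private lemma tikInv_mul (A : H →L[ℝ] F) {α : ℝ} (hα : 0 < α) :
    tikInv A α * tikB A α = 1 :=
  Ring.inverse_mul_cancel _ (isUnit_tikB A hα)

private lemma mul_tikInv (A : H →L[ℝ] F) {α : ℝ} (hα : 0 < α) :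
    tikB A α * tikInv A α = 1 :=
  Ring.mul_inverse_cancel _ (isUnit_tikB A hα)

private lemma norm_tikInv_le (A : H →L[ℝ] F) {α : ℝ} (hα : 0 < α) (y : H) :
    α * ‖tikInv A α y‖ ≤ ‖y‖ := by
  set x := tikInv A α y with hx
  have hBx : tikB A α x = y := by
    have := congrArg (fun T : H →L[ℝ] H => T y) (mul_tikInv A hα)
    simpa [ContinuousLinearMap.mul_apply] using this
  have h1 : α * ‖x‖ ^ 2 ≤ ⟪tikB A α x, x⟫ := by
    rw [inner_tikB]; nlinarith [sq_nonneg ‖A x‖]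
  have h2 : ⟪tikB A α x, x⟫ ≤ ‖y‖ * ‖x‖ := by
    rw [hBx]; exact real_inner_le_norm _ _
  rcases eq_or_ne x 0 with h | h
  · simp only [h, norm_zero, mul_zero]; positivity
  · have hxpos : 0 < ‖x‖ := norm_pos_iff.mpr h
    nlinarith

/-- commuting with an invertible element passes to the `Ring.inverse` -/
private lemma comm_ringInverse {M : Type*} [MonoidWithZero M] {x y : M} (hx : IsUnit x)
    (h : x * y = y * x) : Ring.inverse x * y = y * Ring.inverse x := by
  calc Ring.inverse x * y = Ring.inverse x * y * (x * Ring.inverse x) := by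
        rw [Ring.mul_inverse_cancel x hx, mul_one]
    _ = Ring.inverse x * (y * x) * Ring.inverse x := by simp only [mul_assoc]
    _ = Ring.inverse x * (x * y) * Ring.inverse x := by rw [h]
    _ = y * Ring.inverse x := by rw [Ring.inverse_mul_cancel_left x y hx]

private def tikT (A : H →L[ℝ] F) : H →L[ℝ] H := (ContinuousLinearMap.adjoint A).comp A

private lemma tikB_eq_shift (A : H →L[ℝ] F) (a b : ℝ) :
    tikB A b = (b - a) • (1 : H →L[ℝ] H) + tikB A a := by
  rw [tikB, tikB, ← add_assoc, ← add_smul]; ring_nf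

private lemma tikB_mul_comm (A : H →L[ℝ] F) (a b : ℝ) :
    tikB A a * tikB A b = tikB A b * tikB A a := by
  simp only [tikB, add_mul, mul_add, smul_mul_assoc, mul_smul_comm, one_mul, mul_one,
    smul_smul]
  module

private lemma tikT_mul_comm (A : H →L[ℝ] F) (a : ℝ) :
    tikB A a * tikT A = tikT A * tikB A a := by
  simp only [tikB, tikT, add_mul, mul_add, smul_mul_assoc, mul_smul_comm, one_mul, mul_one]

private lemma tikT_tikInv_comm (A : H →L[ℝ] F) {a : ℝ} (ha : 0 < a) :
    tikInv A a * tikT A = tikT A * tikInv A a := by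
  rw [tikInv_eq]
  exact comm_ringInverse (isUnit_tikB A ha) (tikT_mul_comm A a)

private lemma tikInv_mul_comm (A : H →L[ℝ] F) {a b : ℝ} (ha : 0 < a) (hb : 0 < b) :
    tikInv A a * tikInv A b = tikInv A b * tikInv A a := by
  rw [tikInv_eq, tikInv_eq]
  refine comm_ringInverse (isUnit_tikB A ha) ?_
  exact (comm_ringInverse (isUnit_tikB A hb) (tikB_mul_comm A b a)).symm

private lemma resolvent_identity (A : H →L[ℝ] F) {a b : ℝ} (ha : 0 < a) (hb : 0 < b) :
    tikInv A a = tikInv A b + (b - a) • (tikInv A a * tikInv A b) := by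
  have h1 : tikInv A a * tikB A b = (b - a) • tikInv A a + 1 := by
    rw [tikB_eq_shift A a b, mul_add, mul_smul_comm, mul_one, tikInv_mul A ha]
  calc tikInv A a = tikInv A a * (tikB A b * tikInv A b) := by
        rw [mul_tikInv A hb, mul_one]
    _ = (tikInv A a * tikB A b) * tikInv A b := by rw [mul_assoc]
    _ = ((b - a) • tikInv A a + 1) * tikInv A b := by rw [h1]
    _ = tikInv A b + (b - a) • (tikInv A a * tikInv A b) := by
        rw [add_mul, one_mul, smul_mul_assoc, add_comm]

private lemma key_identity (A : H →L[ℝ] F) {a b : ℝ} (ha : 0 < a) (hb : 0 < b) :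
    b • tikInv A b = a • tikInv A a + (b - a) • (tikT A * (tikInv A b * tikInv A a)) := by
  have hUa := isUnit_tikB A ha
  have hUb := isUnit_tikB A hb
  have cancel : ∀ X Y : H →L[ℝ] H,
      tikB A a * X * tikB A b = tikB A a * Y * tikB A b → X = Y := by
    intro X Y h
    have h2 := congrArg (fun Z => tikInv A a * Z * tikInv A b) h
    simpa only [tikInv_eq, mul_assoc, Ring.inverse_mul_cancel_left _ _ hUa,
      Ring.mul_inverse_cancel _ hUb, mul_one] using h2
  apply cancel
  have e1 : tikB A a * (b • tikInv A b) * tikB A b = b • tikB A a := by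
    rw [mul_smul_comm, smul_mul_assoc, mul_assoc, tikInv_mul A hb, mul_one]
  have e2 : tikB A a * (a • tikInv A a) * tikB A b = a • tikB A b := by
    rw [mul_smul_comm, mul_tikInv A ha, smul_mul_assoc, one_mul]
  have e3 : tikB A a * ((b - a) • (tikT A * (tikInv A b * tikInv A a))) * tikB A b
      = (b - a) • tikT A := by
    rw [mul_smul_comm, smul_mul_assoc]
    congr 1
    have hcomm : tikB A a * tikInv A b = tikInv A b * tikB A a := by
      rw [tikInv_eq]
      exact (comm_ringInverse hUb (tikB_mul_comm A b a)).symm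
    calc tikB A a * (tikT A * (tikInv A b * tikInv A a)) * tikB A b
        = tikT A * (tikB A a * (tikInv A b * tikInv A a)) * tikB A b := by
          rw [← mul_assoc (tikB A a) (tikT A), tikT_mul_comm, mul_assoc (tikT A)]
      _ = tikT A * ((tikInv A b * tikB A a) * tikInv A a) * tikB A b := by
          rw [← mul_assoc (tikB A a), hcomm]
      _ = tikT A * tikInv A b * tikB A b := by
          rw [mul_assoc (tikInv A b), mul_tikInv A ha, mul_one]
      _ = tikT A := by rw [mul_assoc, tikInv_mul A hb, mul_one]
  rw [mul_add, add_mul, e1, e2, e3, tikB, tikB, tikT]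
  module

private def tikQ (A : H →L[ℝ] F) (α : ℝ) : F →L[ℝ] F :=
  α • (1 : F →L[ℝ] F) + A.comp (ContinuousLinearMap.adjoint A)

private lemma isUnit_tikQ (A : H →L[ℝ] F) {α : ℝ} (hα : 0 < α) : IsUnit (tikQ A α) := by
  have h := isUnit_tikB (ContinuousLinearMap.adjoint A) hα
  rwa [tikB, ContinuousLinearMap.adjoint_adjoint] at h

private lemma intertwine (A : H →L[ℝ] F) {b : ℝ} (hb : 0 < b) (x : H) :
    A (tikInv A b x) = (Ring.inverse (tikQ A b)) (A x) := by
  have h2 : tikB A b (tikInv A b x) = x := by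
    have := congrArg (fun T : H →L[ℝ] H => T x) (mul_tikInv A hb)
    simpa [ContinuousLinearMap.mul_apply] using this
  have h3 : tikQ A b (A (tikInv A b x)) = A x := by
    have h1 : ∀ y : H, tikQ A b (A y) = A (tikB A b y) := by
      intro y
      simp [tikQ, tikB, ContinuousLinearMap.add_apply, ContinuousLinearMap.smul_apply,
        ContinuousLinearMap.comp_apply, ContinuousLinearMap.one_apply, map_add, _root_.map_smul]
    rw [h1, h2]
  have h4 := congrArg (fun T : F →L[ℝ] F => T (A (tikInv A b x)))
    (Ring.inverse_mul_cancel _ (isUnit_tikQ A hb))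
  simp only [ContinuousLinearMap.mul_apply, ContinuousLinearMap.one_apply] at h4
  rw [← h4, h3]

private lemma tikQinv_pos (A : H →L[ℝ] F) {b : ℝ} (hb : 0 < b) (y : F) :
    0 ≤ ⟪(Ring.inverse (tikQ A b)) y, y⟫ := by
  set x := (Ring.inverse (tikQ A b)) y with hx
  have hy : tikQ A b x = y := by
    have := congrArg (fun T : F →L[ℝ] F => T y) (Ring.mul_inverse_cancel _ (isUnit_tikQ A hb))
    simpa [ContinuousLinearMap.mul_apply] using this
  have hAA : ⟪x, A ((ContinuousLinearMap.adjoint A) x)⟫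
      = ⟪(ContinuousLinearMap.adjoint A) x, (ContinuousLinearMap.adjoint A) x⟫ := by
    have h5 := ContinuousLinearMap.adjoint_inner_right (ContinuousLinearMap.adjoint A)
      x ((ContinuousLinearMap.adjoint A) x)
    rwa [ContinuousLinearMap.adjoint_adjoint] at h5
  have h6 : ⟪x, tikQ A b x⟫ = b * ‖x‖ ^ 2 + ‖(ContinuousLinearMap.adjoint A) x‖ ^ 2 := by
    simp only [tikQ, ContinuousLinearMap.add_apply, ContinuousLinearMap.smul_apply,
      ContinuousLinearMap.comp_apply, ContinuousLinearMap.one_apply, inner_add_right,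
      real_inner_smul_right, real_inner_self_eq_norm_sq, hAA]
  rw [← hy, h6]
  positivity

private lemma claim1 (A : H →L[ℝ] F) {a b : ℝ} (ha : 0 < a) (hab : a ≤ b) (u : H) :
    a * ‖tikInv A a u‖ ≤ b * ‖tikInv A b u‖ := by
  have hb : 0 < b := ha.trans_le hab
  set x := a • tikInv A a u with hxdef
  set z := (b - a) • (tikT A ((tikInv A b) ((tikInv A a) u))) with hzdef
  have hxz : b • tikInv A b u = x + z := by
    have := congrArg (fun T : H →L[ℝ] H => T u) (key_identity A ha hb)
    simpa only [ContinuousLinearMap.add_apply, ContinuousLinearMap.smul_apply,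
      ContinuousLinearMap.mul_apply] using this
  have hinner : 0 ≤ ⟪x, z⟫ := by
    rw [hxdef, hzdef, real_inner_smul_left, real_inner_smul_right]
    have hswap : (tikInv A b) ((tikInv A a) u) = (tikInv A a) ((tikInv A b) u) := by
      have := congrArg (fun T : H →L[ℝ] H => T u) (tikInv_mul_comm A hb ha)
      simpa only [ContinuousLinearMap.mul_apply] using this
    set w := (tikInv A a) u with hw
    have hTw : ⟪w, tikT A ((tikInv A b) w)⟫ = ⟪A w, A ((tikInv A b) w)⟫ := by
      rw [tikT, ContinuousLinearMap.comp_apply, ContinuousLinearMap.adjoint_inner_right]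
    have hpos : 0 ≤ ⟪w, tikT A ((tikInv A b) w)⟫ := by
      rw [hTw, intertwine A hb w, real_inner_comm]
      exact tikQinv_pos A hb (A w)
    exact mul_nonneg ha.le (mul_nonneg (by linarith) hpos)
  have hnorm : ‖x‖ ≤ ‖x + z‖ := by
    have hsq := norm_add_sq_real x z
    nlinarith [norm_nonneg (x + z), norm_nonneg x, norm_nonneg z, sq_nonneg ‖z‖]
  calc a * ‖tikInv A a u‖ = ‖x‖ := by
        rw [hxdef, norm_smul, Real.norm_eq_abs, abs_of_pos ha]
    _ ≤ ‖x + z‖ := hnorm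
    _ = ‖b • tikInv A b u‖ := by rw [hxz]
    _ = b * ‖tikInv A b u‖ := by rw [norm_smul, Real.norm_eq_abs, abs_of_pos hb]

private lemma claim2 (A : H →L[ℝ] F) {a b : ℝ} (ha : 0 < a) (hab : a ≤ b) (v : H) :
    ‖tikInv A a v‖ ≤ (b / a) * ‖tikInv A b v‖ := by
  have hb : 0 < b := ha.trans_le hab
  have hid : (tikInv A a) v = (tikInv A b) v
      + (b - a) • ((tikInv A a) ((tikInv A b) v)) := by
    have := congrArg (fun T : H →L[ℝ] H => T v) (resolvent_identity A ha hb)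
    simpa only [ContinuousLinearMap.add_apply, ContinuousLinearMap.smul_apply,
      ContinuousLinearMap.mul_apply] using this
  have hbound : ‖(tikInv A a) ((tikInv A b) v)‖ ≤ a⁻¹ * ‖(tikInv A b) v‖ := by
    have := norm_tikInv_le A ha ((tikInv A b) v)
    rw [← le_div_iff₀' ha] at this
    simpa [div_eq_inv_mul] using this
  calc ‖tikInv A a v‖ ≤ ‖(tikInv A b) v‖ + ‖(b - a) • ((tikInv A a) ((tikInv A b) v))‖ := by
        rw [hid]; exact norm_add_le _ _
    _ ≤ ‖(tikInv A b) v‖ + (b - a) * (a⁻¹ * ‖(tikInv A b) v‖) := by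
        rw [norm_smul, Real.norm_eq_abs, abs_of_nonneg (by linarith : (0:ℝ) ≤ b - a)]
        have h7 : (0:ℝ) ≤ b - a := by linarith
        nlinarith [hbound, norm_nonneg ((tikInv A b) v)]
    _ = (b / a) * ‖tikInv A b v‖ := by field_simp; ring

private lemma e1_eq (A : H →L[ℝ] F) (f fstar : F) (ustar : H) (hA : A ustar = fstar)
    {α : ℝ} (hα : 0 < α) :
    e1 A f fstar ustar α =
      α * ‖tikInv A α ustar‖
        + ‖tikInv A α ((ContinuousLinearMap.adjoint A) (f - fstar))‖ := by
  have h1 : tikSol A fstar α - ustar = -(α • tikInv A α ustar) := by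
    have hu : ustar = tikInv A α (tikB A α ustar) := by
      have := congrArg (fun T : H →L[ℝ] H => T ustar) (tikInv_mul A hα)
      simpa only [ContinuousLinearMap.mul_apply, ContinuousLinearMap.one_apply] using this.symm
    have hT : tikSol A fstar α = tikInv A α (tikT A ustar) := by
      rw [tikSol, ← hA]; rfl
    calc tikSol A fstar α - ustar
        = tikInv A α (tikT A ustar) - tikInv A α (tikB A α ustar) := by rw [hT, ← hu]
      _ = tikInv A α (tikT A ustar - tikB A α ustar) := by rw [_root_.map_sub]
      _ = tikInv A α (-(α • ustar)) := by
          congr 1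
          simp only [tikT, tikB, ContinuousLinearMap.add_apply,
            ContinuousLinearMap.smul_apply, ContinuousLinearMap.one_apply]
          abel
      _ = -(α • tikInv A α ustar) := by rw [map_neg, _root_.map_smul]
  have h2 : tikSol A f α - tikSol A fstar α
      = tikInv A α ((ContinuousLinearMap.adjoint A) (f - fstar)) := by
    rw [tikSol, tikSol, ← _root_.map_sub, ← _root_.map_sub]
  rw [e1, h1, h2, norm_neg, norm_smul, Real.norm_eq_abs, abs_of_pos hα]

end TikAux

/-- the minimum of `e1` over the geometric grid is at most `q⁻¹` times the
minimum of `e1` over the whole interval `[α_N, α_0]`. -/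
theorem min_grid_e1_le_inv_q_mul_inf_e1 (A : H →L[ℝ] F) (f fstar : F) (ustar : H)
    (hA : A ustar = fstar) (q : ℝ) (hq : q ∈ Set.Ioo (0 : ℝ) 1)
    (N : ℕ) (hN : 1 ≤ N) (α0 : ℝ) (hα0 : 0 < α0) :
    (⨅ j : Fin (N + 1), e1 A f fstar ustar (α0 * q ^ (j : ℕ))) ≤
      q⁻¹ * sInf ((e1 A f fstar ustar) '' Set.Icc (α0 * q ^ N) α0) := by
  classical
  obtain ⟨hq0, hq1⟩ := hq
  set g := e1 A f fstar ustar with hg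
  have hgnn : ∀ α, 0 ≤ g α := fun α => add_nonneg (norm_nonneg _) (norm_nonneg _)
  set m := ⨅ j : Fin (N + 1), g (α0 * q ^ (j : ℕ)) with hm
  have hbdd : BddBelow (Set.range fun j : Fin (N + 1) => g (α0 * q ^ (j : ℕ))) :=
    Set.Finite.bddBelow (Set.finite_range _)
  have hq1' : 1 ≤ q⁻¹ := by rw [le_inv_comm₀] <;> simp [hq0, hq1.le]
  have hkey : ∀ α ∈ Set.Icc (α0 * q ^ N) α0, q * m ≤ g α := by
    intro α hαmem
    obtain ⟨hαl, hαr⟩ := hαmem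
    have hαpos : 0 < α := lt_of_lt_of_le (by positivity) hαl
    have hex : ∃ j, α0 * q ^ j ≤ α := ⟨N, hαl⟩
    set j := Nat.find hex with hj
    have hjle : j ≤ N := Nat.find_min' hex hαl
    have hja : α0 * q ^ j ≤ α := Nat.find_spec hex
    set a := α0 * q ^ j with hadef
    have hapos : 0 < a := by positivity
    have hqm : q * α ≤ a := by
      rcases Nat.eq_zero_or_pos j with h0 | h0
      · rw [hadef, h0, pow_zero, mul_one]
        nlinarith
      · have hmin : ¬ (α0 * q ^ (j - 1) ≤ α) := Nat.find_min hex (Nat.sub_lt h0 one_pos)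
        push_neg at hmin
        have hpow : q ^ j = q * q ^ (j - 1) := by
          rw [← pow_succ']
          congr 1
          omega
        have hpow2 : a = q * (α0 * q ^ (j - 1)) := by rw [hadef, hpow]; ring
        rw [hpow2]
        nlinarith
    have hba : α / a ≤ q⁻¹ := by
      rw [div_le_iff₀ hapos]
      calc α = q⁻¹ * (q * α) := by field_simp
        _ ≤ q⁻¹ * a := mul_le_mul_of_nonneg_left hqm (by positivity)
    have hcomp : g a ≤ q⁻¹ * g α := by
      rw [hg]
      rw [e1_eq A f fstar ustar hA hapos, e1_eq A f fstar ustar hA hαpos]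
      have t1 := claim1 A hapos hja ustar
      have t2 := claim2 A hapos hja ((ContinuousLinearMap.adjoint A) (f - fstar))
      have s1 : α * ‖tikInv A α ustar‖ ≤ q⁻¹ * (α * ‖tikInv A α ustar‖) :=
        le_mul_of_one_le_left (by positivity) hq1'
      have s2 : (α / a) * ‖tikInv A α ((ContinuousLinearMap.adjoint A) (f - fstar))‖
          ≤ q⁻¹ * ‖tikInv A α ((ContinuousLinearMap.adjoint A) (f - fstar))‖ :=
        mul_le_mul_of_nonneg_right hba (norm_nonneg _)
      rw [mul_add]
      have tt2 : ‖tikInv A a ((ContinuousLinearMap.adjoint A) (f - fstar))‖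
          ≤ (α / a) * ‖tikInv A α ((ContinuousLinearMap.adjoint A) (f - fstar))‖ := t2
      linarith [t1, s1, s2, tt2]
    have hma : m ≤ g a := by
      have := ciInf_le hbdd (⟨j, by omega⟩ : Fin (N + 1))
      simpa using this
    have : m ≤ q⁻¹ * g α := hma.trans hcomp
    calc q * m ≤ q * (q⁻¹ * g α) := mul_le_mul_of_nonneg_left this hq0.le
      _ = g α := by field_simp
  have hne : ((g '' Set.Icc (α0 * q ^ N) α0)).Nonempty := by
    refine ⟨g α0, ⟨α0, ⟨?_, le_rfl⟩, rfl⟩⟩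
    exact mul_le_of_le_one_right hα0.le (pow_le_one₀ hq0.le hq1.le)
  have hsinf : q * m ≤ sInf (g '' Set.Icc (α0 * q ^ N) α0) := by
    apply le_csInf hne
    rintro y ⟨α, hα, rfl⟩
    exact hkey α hα
  calc m = q⁻¹ * (q * m) := by field_simp
    _ ≤ q⁻¹ * sInf (g '' Set.Icc (α0 * q ^ N) α0) :=
        mul_le_mul_of_nonneg_left hsinf (inv_nonneg.mpr hq0.le)
end
end

section
/- For every α > 0 and q ∈ (0,1), the difference of consecutive Tikhonov approximations satisfies ‖u_α − u_{qα}‖ ≤ (q^{-1} − 1) ψ_Q(qα), where ψ_Q(qα) = qα‖(qαI + A*A)^{-2} A* f‖. -/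
set_option synthInstance.maxHeartbeats 1000000

open MeasureTheory
open scoped RealInnerProductSpace

noncomputable section

variable {H F : Type*} [NormedAddCommGroup H] [InnerProductSpace ℝ H] [CompleteSpace H]
  [NormedAddCommGroup F] [InnerProductSpace ℝ F] [CompleteSpace F]

open ContinuousLinearMap

lemma inner_tikOp (A : H →L[ℝ] F) (β : ℝ) (x : H) :
    ⟪(β • (1 : H →L[ℝ] H) + (adjoint A).comp A) x, x⟫ = β * ‖x‖ ^ 2 + ‖A x‖ ^ 2 := by
  simp [inner_add_left, real_inner_smul_left, adjoint_inner_left,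
    real_inner_self_eq_norm_sq]

lemma isUnit_tikOp (A : H →L[ℝ] F) {β : ℝ} (hβ : 0 < β) :
    IsUnit (β • (1 : H →L[ℝ] H) + (adjoint A).comp A) := by
  set M := β • (1 : H →L[ℝ] H) + (adjoint A).comp A with hM
  have coer : IsCoercive ((innerSL ℝ).comp M) := by
    refine ⟨β, hβ, fun u => ?_⟩
    simp only [ContinuousLinearMap.comp_apply, innerSL_apply_apply]
    rw [hM, inner_tikOp]
    nlinarith [sq_nonneg ‖A u‖]
  set e := coer.continuousLinearEquivOfBilin with he
  have hMe : (M : H → H) = e := by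
    funext v
    refine ext_inner_right ℝ fun w => ?_
    rw [coer.continuousLinearEquivOfBilin_apply]
    simp
  rw [ContinuousLinearMap.isUnit_iff_bijective, hMe]
  exact e.bijective

lemma commute_tikOp (A : H →L[ℝ] F) (β γ : ℝ) :
    Commute (β • (1 : H →L[ℝ] H) + (adjoint A).comp A)
      (γ • (1 : H →L[ℝ] H) + (adjoint A).comp A) := by
  show _ * _ = _ * _
  ext x
  set T := (adjoint A).comp A
  simp only [ContinuousLinearMap.mul_apply, ContinuousLinearMap.add_apply,
    ContinuousLinearMap.smul_apply, ContinuousLinearMap.one_apply, map_add, _root_.map_smul]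
  module


/-- for `α > 0` and `q ∈ (0,1)`, `‖u_α - u_{qα}‖ ≤ (q⁻¹ - 1) ψ_Q(qα)`. -/
theorem norm_sub_le_psiQ (A : H →L[ℝ] F) (f : F)
    (q : ℝ) (hq : q ∈ Set.Ioo (0 : ℝ) 1) (α : ℝ) (hα : 0 < α) :
    ‖tikSol A f α - tikSol A f (q * α)‖ ≤ (q⁻¹ - 1) * psiQ A f (q * α) := by
  obtain ⟨hq0, hq1⟩ := hq
  set β := q * α with hβdef
  have hβ : 0 < β := mul_pos hq0 hα
  have hβα : β < α := by
    rw [hβdef]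
    nlinarith
  set T := (adjoint A).comp A with hT
  set Mα := α • (1 : H →L[ℝ] H) + T with hMα
  set Mβ := β • (1 : H →L[ℝ] H) + T with hMβ
  set Iα := tikInv A α with hIα
  set Iβ := tikInv A β with hIβ
  have hIαdef : Iα = Ring.inverse Mα := rfl
  have hIβdef : Iβ = Ring.inverse Mβ := rfl
  have hUα : IsUnit Mα := isUnit_tikOp A hα
  have hUβ : IsUnit Mβ := isUnit_tikOp A hβ
  set g := adjoint A f with hg
  -- pointwise norm comparison
  have key : ∀ y : H, ‖Mβ y‖ ≤ ‖Mα y‖ := by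
    intro y
    have h1 : Mα y = Mβ y + (α - β) • y := by
      simp only [hMα, hMβ, ContinuousLinearMap.add_apply, ContinuousLinearMap.smul_apply,
        ContinuousLinearMap.one_apply]
      module
    have h2 : 0 ≤ ⟪Mβ y, y⟫ := by
      rw [hMβ, inner_tikOp]
      positivity
    have h3 := norm_add_sq_real (Mβ y) ((α - β) • y)
    rw [real_inner_smul_right, norm_smul] at h3
    rw [h1, ← pow_le_pow_iff_left₀ (norm_nonneg _) (norm_nonneg _) two_ne_zero]
    have h4 : 0 ≤ (α - β) * ⟪Mβ y, y⟫ := mul_nonneg (by linarith) h2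
    nlinarith [sq_nonneg (‖α - β‖ * ‖y‖)]
  -- operator identities
  have hBA : Mβ - Mα = (β - α) • (1 : H →L[ℝ] H) := by
    ext x
    simp only [hMα, hMβ, ContinuousLinearMap.sub_apply, ContinuousLinearMap.add_apply,
      ContinuousLinearMap.smul_apply, ContinuousLinearMap.one_apply]
    module
  have h1 : Iα * Mβ * Iβ = Iα := by
    rw [hIαdef, hIβdef, mul_assoc, Ring.mul_inverse_cancel _ hUβ, mul_one]
  have h2 : Iα * Mα * Iβ = Iβ := by
    rw [hIαdef, hIβdef, Ring.inverse_mul_cancel _ hUα, one_mul]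
  have hdiff : Iα - Iβ = (β - α) • (Iα * Iβ) := by
    calc Iα - Iβ = Iα * Mβ * Iβ - Iα * Mα * Iβ := by rw [h1, h2]
      _ = Iα * (Mβ - Mα) * Iβ := by rw [mul_sub, sub_mul]
      _ = (β - α) • (Iα * Iβ) := by
          rw [hBA, mul_smul_comm, mul_one, smul_mul_assoc]
  -- commutation of Mβ with Iα
  obtain ⟨u, hu⟩ := id hUα
  have hIαu : Iα = ↑u⁻¹ := by rw [hIαdef, ← hu, Ring.inverse_unit]
  have hcM : Commute Mβ Mα := commute_tikOp A β α
  have hcomm : Mβ * Iα = Iα * Mβ := by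
    rw [hIαu]
    exact (hu ▸ hcM).units_inv_right
  have hcomm' : ∀ w : H, Mβ (Iα w) = Iα (Mβ w) := by
    intro w
    have := congrArg (fun (L : H →L[ℝ] H) => L w) hcomm
    simpa [ContinuousLinearMap.mul_apply] using this
  have hMβIβ : ∀ w : H, Mβ (Iβ w) = w := by
    intro w
    have h := Ring.mul_inverse_cancel _ hUβ
    rw [← hIβdef] at h
    have := congrArg (fun (L : H →L[ℝ] H) => L w) h
    simpa [ContinuousLinearMap.mul_apply] using this
  -- main computation
  have hsol : tikSol A f α - tikSol A f β = (β - α) • (Iα (Iβ g)) := by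
    have : tikSol A f α - tikSol A f β = (Iα - Iβ) g := by
      simp [tikSol, hIα, hIβ, hg, ContinuousLinearMap.sub_apply]
    rw [this, hdiff]
    simp [ContinuousLinearMap.smul_apply, ContinuousLinearMap.mul_apply]
  have hIsq : (Iβ ^ 2) g = Iβ (Iβ g) := by
    rw [sq]
    simp [ContinuousLinearMap.mul_apply]
  have hrewrite : Iα (Iβ g) = Mβ (Iα ((Iβ ^ 2) g)) := by
    rw [hcomm', hIsq, hMβIβ]
  have hbound : ‖Iα (Iβ g)‖ ≤ ‖(Iβ ^ 2) g‖ := by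
    rw [hrewrite]
    calc ‖Mβ (Iα ((Iβ ^ 2) g))‖ ≤ ‖Mα (Iα ((Iβ ^ 2) g))‖ := key _
      _ = ‖(Iβ ^ 2) g‖ := by
          have h := Ring.mul_inverse_cancel _ hUα
          rw [← hIαdef] at h
          have := congrArg (fun (L : H →L[ℝ] H) => L ((Iβ ^ 2) g)) h
          simp only [ContinuousLinearMap.mul_apply, ContinuousLinearMap.one_apply] at this
          rw [this]
  have hps : psiQ A f β = β * ‖(Iβ ^ 2) g‖ := rfl
  have hcoef : (q⁻¹ - 1) * β = α - β := by
    rw [hβdef]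
    field_simp
  rw [hsol, norm_smul, Real.norm_eq_abs, abs_of_neg (by linarith), hps]
  have : (q⁻¹ - 1) * (β * ‖(Iβ ^ 2) g‖) = (α - β) * ‖(Iβ ^ 2) g‖ := by
    rw [← mul_assoc, hcoef]
  rw [this]
  have := mul_le_mul_of_nonneg_left hbound (le_of_lt (by linarith : (0:ℝ) < α - β))
  linarith
end
end

section
/- The error functional e1 tends to the norm of the exact solution at infinity: e1(α) = ‖u_α^+ − u_*‖ + ‖u_α − u_α^+‖ → ‖u_*‖ as α → ∞. -/
open MeasureTheory
open scoped RealInnerProductSpace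

set_option synthInstance.maxHeartbeats 1000000
set_option maxHeartbeats 1000000

noncomputable section

variable {H F : Type*} [NormedAddCommGroup H] [InnerProductSpace ℝ H] [CompleteSpace H]
  [NormedAddCommGroup F] [InnerProductSpace ℝ F] [CompleteSpace F]

lemma isUnit_tik (A : H →L[ℝ] F) {α : ℝ}
    (hα : ‖(ContinuousLinearMap.adjoint A).comp A‖ < α) :
    IsUnit (α • (1 : H →L[ℝ] H) + (ContinuousLinearMap.adjoint A).comp A) := by
  set T := (ContinuousLinearMap.adjoint A).comp A
  have hα0 : 0 < α := lt_of_le_of_lt (norm_nonneg T) hα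
  have h1 : ‖-(α⁻¹ • T)‖ < 1 := by
    rw [norm_neg, norm_smul α⁻¹ T, norm_inv, Real.norm_of_nonneg hα0.le]
    rw [inv_mul_lt_one₀ hα0]
    exact hα
  have hu : IsUnit ((1 : H →L[ℝ] H) - (-(α⁻¹ • T))) := (Units.oneSub _ h1).isUnit
  have hs : IsUnit (α • (1 : H →L[ℝ] H)) := by
    have := (isUnit_iff_ne_zero.mpr hα0.ne').map (algebraMap ℝ (H →L[ℝ] H))
    rwa [Algebra.algebraMap_eq_smul_one] at this
  have : α • (1 : H →L[ℝ] H) + T = (α • (1 : H →L[ℝ] H)) * ((1 : H →L[ℝ] H) - (-(α⁻¹ • T))) := by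
    rw [sub_neg_eq_add, mul_add, mul_one, smul_mul_assoc, one_mul, smul_smul,
      mul_inv_cancel₀ hα0.ne', one_smul]
  rw [this]
  exact hs.mul hu

lemma norm_tikSol_le (A : H →L[ℝ] F) (g : F) {α : ℝ}
    (hα : ‖(ContinuousLinearMap.adjoint A).comp A‖ < α) :
    ‖tikSol A g α‖ ≤ ‖(ContinuousLinearMap.adjoint A) g‖ / α := by
  set T := (ContinuousLinearMap.adjoint A).comp A
  set S := α • (1 : H →L[ℝ] H) + T with hS
  have hα0 : 0 < α := lt_of_le_of_lt (norm_nonneg T) hα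
  have hu : IsUnit S := isUnit_tik A hα
  set w := tikSol A g α with hw
  have hSw : S w = (ContinuousLinearMap.adjoint A) g := by
    have : S * Ring.inverse S = 1 := Ring.mul_inverse_cancel S hu
    calc S w = (S * Ring.inverse S) ((ContinuousLinearMap.adjoint A) g) := rfl
    _ = _ := by rw [this]; rfl
  -- α ‖w‖² ≤ ⟪S w, w⟫
  have key : α * ‖w‖ ^ 2 ≤ ‖S w‖ * ‖w‖ := by
    have hT : ⟪T w, w⟫ = ‖A w‖ ^ 2 := by
      show ⟪((ContinuousLinearMap.adjoint A).comp A) w, w⟫ = ‖A w‖ ^ 2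
      rw [ContinuousLinearMap.comp_apply, ContinuousLinearMap.adjoint_inner_left,
        real_inner_self_eq_norm_sq]
    have h1 : ⟪S w, w⟫ = α * ‖w‖ ^ 2 + ‖A w‖ ^ 2 := by
      simp only [hS, ContinuousLinearMap.add_apply, ContinuousLinearMap.smul_apply,
        ContinuousLinearMap.one_apply, inner_add_left, real_inner_smul_left]
      rw [hT, real_inner_self_eq_norm_sq]
    have h2 : ⟪S w, w⟫ ≤ ‖S w‖ * ‖w‖ := real_inner_le_norm _ _
    nlinarith [sq_nonneg ‖A w‖]
  have hnorm : α * ‖w‖ ≤ ‖S w‖ := by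
    rcases eq_or_ne w 0 with h | h
    · simp [h, norm_nonneg]
    · have hwpos : 0 < ‖w‖ := norm_pos_iff.mpr h
      nlinarith
  rw [hSw] at hnorm
  rw [le_div_iff₀ hα0]
  linarith

lemma tikSol_tendsto_zero (A : H →L[ℝ] F) (g : F) :
    Filter.Tendsto (fun α => tikSol A g α) Filter.atTop (nhds 0) := by
  apply tendsto_zero_iff_norm_tendsto_zero.mpr
  have h0 : Filter.Tendsto (fun α : ℝ => ‖(ContinuousLinearMap.adjoint A) g‖ / α)
      Filter.atTop (nhds 0) := by
    simpa [div_eq_mul_inv] using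
      tendsto_inv_atTop_zero.const_mul ‖(ContinuousLinearMap.adjoint A) g‖
  refine squeeze_zero' ?_ ?_ h0
  · exact Filter.Eventually.of_forall fun α => norm_nonneg _
  · filter_upwards [Filter.eventually_gt_atTop ‖(ContinuousLinearMap.adjoint A).comp A‖]
      with α hα
    exact norm_tikSol_le A g hα

theorem e1_tendsto_norm_ustar' (A : H →L[ℝ] F) (f fstar : F) (ustar : H) :
    Filter.Tendsto
      (fun α => ‖tikSol A fstar α - ustar‖ + ‖tikSol A f α - tikSol A fstar α‖)
      Filter.atTop (nhds ‖ustar‖) := by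
  have h1 := tikSol_tendsto_zero A fstar
  have h2 := tikSol_tendsto_zero A f
  have hc : Filter.Tendsto (fun _ : ℝ => ustar) Filter.atTop (nhds ustar) :=
    tendsto_const_nhds
  have key : Filter.Tendsto
      (fun α => ‖tikSol A fstar α - ustar‖ + ‖tikSol A f α - tikSol A fstar α‖)
      Filter.atTop (nhds (‖(0 : H) - ustar‖ + ‖(0 : H) - (0 : H)‖)) :=
    ((h1.sub hc).norm).add ((h2.sub h1).norm)
  simpa using key

/-- `e1(α) → ‖u_*‖` as `α → ∞`. -/
theorem e1_tendsto_norm_ustar (A : H →L[ℝ] F) (f fstar : F) (ustar : H)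
    (hA : A ustar = fstar) :
    Filter.Tendsto (e1 A f fstar ustar) Filter.atTop (nhds ‖ustar‖) :=
  e1_tendsto_norm_ustar' A f fstar ustar
end
end

section
/- On the geometric grid α_i = α_0 q^i, let 0 ≤ j < m ≤ N be indices such that ψ_Q(α_{i}) ≤ ψ_Q(α_j) for all i with j < i ≤ m. Then ‖u_{α_m} − u_{α_j}‖ ≤ (q^{-1} − 1)(m − j) ψ_Q(α_j). -/
/-!
Write `B_α = α I + A* A`, so that `u_α = B_α⁻¹ A* f`; for `α > 0` the operator `B_α` is coercive,
hence invertible by Lax–Milgram. For `0 < β ≤ α` one has `u_β - u_α = (α - β) B_α⁻¹ u_β`, and with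
`v = B_β⁻² A* f` this is `(α - β) B_β B_α⁻¹ v`. Since `B_α z = B_β z + (α - β) z` and
`⟪B_β z, z⟫ ≥ 0`, we get `‖B_β z‖ ≤ ‖B_α z‖`, so `‖u_β - u_α‖ ≤ (α - β) ‖v‖ = (α / β - 1) ψ_Q(β)`.
On the grid `α_i / α_{i+1} = q⁻¹`, so each of the `m - j` steps from `α_j` to `α_m` moves `u` by at
most `(q⁻¹ - 1) ψ_Q(α_{i+1}) ≤ (q⁻¹ - 1) ψ_Q(α_j)`.
-/

open MeasureTheory
open scoped RealInnerProductSpace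

noncomputable section

variable {H F : Type*} [NormedAddCommGroup H] [InnerProductSpace ℝ H] [CompleteSpace H]
  [NormedAddCommGroup F] [InnerProductSpace ℝ F] [CompleteSpace F]

open ContinuousLinearMap

theorem isUnit_of_isCoercive_innerSL_comp {V : Type*} [NormedAddCommGroup V]
    [InnerProductSpace ℝ V] [CompleteSpace V] {T : V →L[ℝ] V}
    (hT : IsCoercive ((innerSL ℝ).comp T)) : IsUnit T := by
  have hT_eq : ⇑hT.continuousLinearEquivOfBilin = T := by
    ext v
    exact (hT.unique_continuousLinearEquivOfBilin fun w => rfl).symm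
  refine ⟨(ContinuousLinearEquiv.unitsEquiv ℝ V).symm hT.continuousLinearEquivOfBilin, ?_⟩
  ext v
  exact congrFun hT_eq v

def tikOp (A : H →L[ℝ] F) (α : ℝ) : H →L[ℝ] H :=
  α • (1 : H →L[ℝ] H) + (adjoint A).comp A

section TikhonovOperator

variable (A : H →L[ℝ] F) {α β : ℝ}

theorem tikOp_apply (x : H) : tikOp A α x = α • x + adjoint A (A x) := rfl

theorem inner_tikOp_self (x : H) : ⟪tikOp A α x, x⟫ = α * ‖x‖ ^ 2 + ‖A x‖ ^ 2 := by
  rw [tikOp_apply, inner_add_left, real_inner_smul_left, adjoint_inner_left,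
    real_inner_self_eq_norm_sq, real_inner_self_eq_norm_sq]

theorem isUnit_tikOp_s18 (hα : 0 < α) : IsUnit (tikOp A α) := by
  refine isUnit_of_isCoercive_innerSL_comp ⟨α, hα, fun x => ?_⟩
  rw [comp_apply, innerSL_apply_apply, inner_tikOp_self]
  nlinarith [sq_nonneg ‖A x‖]

theorem tikOp_tikInv_apply (hα : 0 < α) (x : H) : tikOp A α (tikInv A α x) = x :=
  DFunLike.congr_fun (Ring.mul_inverse_cancel _ (isUnit_tikOp_s18 A hα)) x

theorem tikInv_tikOp_apply (hα : 0 < α) (x : H) : tikInv A α (tikOp A α x) = x :=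
  DFunLike.congr_fun (Ring.inverse_mul_cancel _ (isUnit_tikOp_s18 A hα)) x

theorem tikOp_tikSol (f : F) (hα : 0 < α) : tikOp A α (tikSol A f α) = adjoint A f :=
  tikOp_tikInv_apply A hα _

theorem tikOp_apply_eq_add (α β : ℝ) (x : H) : tikOp A α x = tikOp A β x + (α - β) • x := by
  simp only [tikOp_apply, sub_smul]
  abel

theorem tikInv_tikOp_comm (hα : 0 < α) (β : ℝ) (x : H) :
    tikInv A α (tikOp A β x) = tikOp A β (tikInv A α x) := by
  rw [tikOp_apply_eq_add A β α, tikOp_apply_eq_add A β α, map_add, map_smul,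
    tikInv_tikOp_apply A hα, tikOp_tikInv_apply A hα]

theorem norm_tikOp_le_norm_tikOp (hβ : 0 ≤ β) (hβα : β ≤ α) (z : H) :
    ‖tikOp A β z‖ ≤ ‖tikOp A α z‖ := by
  have hcross : 0 ≤ ⟪tikOp A β z, z⟫ := by rw [inner_tikOp_self]; positivity
  have hsq : ‖tikOp A β z‖ ^ 2 ≤ ‖tikOp A α z‖ ^ 2 := by
    rw [tikOp_apply_eq_add A α β, norm_add_sq_real, real_inner_smul_right, norm_smul,
      Real.norm_of_nonneg (sub_nonneg.2 hβα)]
    nlinarith [mul_nonneg (sub_nonneg.2 hβα) hcross]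
  exact (pow_le_pow_iff_left₀ (norm_nonneg _) (norm_nonneg _) two_ne_zero).1 hsq

theorem norm_tikSol_sub_tikSol_le (f : F) (hβ : 0 < β) (hβα : β ≤ α) :
    ‖tikSol A f β - tikSol A f α‖ ≤ (α - β) * ‖(tikInv A β ^ 2) (adjoint A f)‖ := by
  have hα : 0 < α := hβ.trans_le hβα
  set v := (tikInv A β ^ 2) (adjoint A f)
  have hv : tikOp A β v = tikSol A f β := tikOp_tikInv_apply A hβ _
  have hdiff : tikSol A f β - tikSol A f α = (α - β) • tikInv A α (tikSol A f β) := by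
    calc tikSol A f β - tikSol A f α
        = tikInv A α (tikOp A α (tikSol A f β) - adjoint A f) := by
          rw [map_sub, tikInv_tikOp_apply A hα]; rfl
      _ = (α - β) • tikInv A α (tikSol A f β) := by
          rw [tikOp_apply_eq_add A α β, tikOp_tikSol A f hβ, add_sub_cancel_left, map_smul]
  calc ‖tikSol A f β - tikSol A f α‖
      = (α - β) * ‖tikOp A β (tikInv A α v)‖ := by
        rw [hdiff, ← hv, tikInv_tikOp_comm A hα, norm_smul,
          Real.norm_of_nonneg (sub_nonneg.2 hβα)]
    _ ≤ (α - β) * ‖tikOp A α (tikInv A α v)‖ := by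
        gcongr
        exact norm_tikOp_le_norm_tikOp A hβ.le hβα _
    _ = (α - β) * ‖v‖ := by rw [tikOp_tikInv_apply A hα]

theorem norm_tikSol_mul_sub_le (f : F) {q : ℝ} (hq0 : 0 < q) (hq1 : q ≤ 1) (hα : 0 < α) :
    ‖tikSol A f (q * α) - tikSol A f α‖ ≤ (q⁻¹ - 1) * psiQ A f (q * α) := by
  calc ‖tikSol A f (q * α) - tikSol A f α‖
      ≤ (α - q * α) * ‖(tikInv A (q * α) ^ 2) (adjoint A f)‖ :=
        norm_tikSol_sub_tikSol_le A f (mul_pos hq0 hα) (by nlinarith)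
    _ = (q⁻¹ - 1) * psiQ A f (q * α) := by
        rw [psiQ]
        field_simp

end TikhonovOperator

theorem norm_sub_grid_le_general (A : H →L[ℝ] F) (f : F)
    (q : ℝ) (hq : q ∈ Set.Ioo (0 : ℝ) 1) (α0 : ℝ) (hα0 : 0 < α0)
    (j m : ℕ) (hjm : j < m)
    (hψ : ∀ i, j < i → i ≤ m → psiQ A f (α0 * q ^ i) ≤ psiQ A f (α0 * q ^ j)) :
    ‖tikSol A f (α0 * q ^ m) - tikSol A f (α0 * q ^ j)‖ ≤
      (q⁻¹ - 1) * ((m - j : ℕ) : ℝ) * psiQ A f (α0 * q ^ j) := by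
  obtain ⟨hq0, hq1⟩ := hq
  have hc : 0 ≤ q⁻¹ - 1 := sub_nonneg.2 ((one_le_inv₀ hq0).2 hq1.le)
  have hstep : ∀ {k}, j ≤ k → k < m →
      dist (tikSol A f (α0 * q ^ k)) (tikSol A f (α0 * q ^ (k + 1))) ≤
        (q⁻¹ - 1) * psiQ A f (α0 * q ^ j) := by
    intro k hjk hkm
    have hgrid : α0 * q ^ (k + 1) = q * (α0 * q ^ k) := by ring
    rw [dist_comm, dist_eq_norm, hgrid]
    calc _ ≤ (q⁻¹ - 1) * psiQ A f (q * (α0 * q ^ k)) :=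
          norm_tikSol_mul_sub_le A f hq0 hq1.le (by positivity)
      _ ≤ (q⁻¹ - 1) * psiQ A f (α0 * q ^ j) := by
          rw [← hgrid]
          exact mul_le_mul_of_nonneg_left (hψ _ (by omega) hkm) hc
  rw [← dist_eq_norm, dist_comm]
  calc _ ≤ ∑ _ ∈ Finset.Ico j m, (q⁻¹ - 1) * psiQ A f (α0 * q ^ j) :=
        dist_le_Ico_sum_of_dist_le hjm.le hstep
    _ = _ := by rw [Finset.sum_const, Nat.card_Ico, nsmul_eq_mul]; ring

/-- on the grid `α_i = α_0 q^i`, if `ψ_Q(α_i) ≤ ψ_Q(α_j)` for all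
`j < i ≤ m`, then `‖u_{α_m} - u_{α_j}‖ ≤ (q⁻¹ - 1)(m - j) ψ_Q(α_j)`. -/
theorem norm_sub_grid_le (A : H →L[ℝ] F) (f : F)
    (q : ℝ) (hq : q ∈ Set.Ioo (0 : ℝ) 1) (α0 : ℝ) (hα0 : 0 < α0)
    (N j m : ℕ) (hjm : j < m) (hmN : m ≤ N)
    (hψ : ∀ i, j < i → i ≤ m → psiQ A f (α0 * q ^ i) ≤ psiQ A f (α0 * q ^ j)) :
    ‖tikSol A f (α0 * q ^ m) - tikSol A f (α0 * q ^ j)‖ ≤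
      (q⁻¹ - 1) * ((m - j : ℕ) : ℝ) * psiQ A f (α0 * q ^ j) :=
  norm_sub_grid_le_general A f q hq α0 hα0 j m hjm hψ
end
end

section
/- Suppose the operator A*A is coercive with constant λ > 0, i.e. ⟨A*A x, x⟩ ≥ λ‖x‖² for all x ∈ H. Then for every α' with 0 < α' ≤ λ the Tikhonov approximation satisfies ‖u_{α'} − u_*‖ ≤ 2 e1(λ); in particular, ‖(α'I + A*A)^{-1} A*(f − f_*)‖ ≤ 2‖(λI + A*A)^{-1} A*(f − f_*)‖. -/
open MeasureTheory
open scoped RealInnerProductSpace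

noncomputable section

variable {H F : Type*} [NormedAddCommGroup H] [InnerProductSpace ℝ H] [CompleteSpace H]
  [NormedAddCommGroup F] [InnerProductSpace ℝ F] [CompleteSpace F]

lemma sop_isUnit (A : H →L[ℝ] F) (lam : ℝ) (hlam : 0 < lam)
    (hcoer : ∀ x : H, lam * ‖x‖ ^ 2 ≤ ⟪((ContinuousLinearMap.adjoint A).comp A) x, x⟫)
    (α : ℝ) (hα : 0 < α) :
    IsUnit (α • (1 : H →L[ℝ] H) + (ContinuousLinearMap.adjoint A).comp A) := by
  set T := (ContinuousLinearMap.adjoint A).comp A with hT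
  set S := α • (1 : H →L[ℝ] H) + T with hS
  have hB : ∀ v w : H, ((innerSL ℝ).comp S) v w = ⟪S v, w⟫ := fun v w => rfl
  have hcoB : IsCoercive ((innerSL ℝ).comp S) := by
    refine ⟨α + lam, by positivity, fun u => ?_⟩
    have h1 := hcoer u
    have h2 : ⟪S u, u⟫ = α * ‖u‖ ^ 2 + ⟪T u, u⟫ := by
      simp [hS, ContinuousLinearMap.add_apply, ContinuousLinearMap.smul_apply,
        inner_add_left, real_inner_smul_left, real_inner_self_eq_norm_sq]
    rw [hB, h2]; nlinarith [sq_nonneg ‖u‖]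
  have e := hcoB.continuousLinearEquivOfBilin
  have he : ∀ v, hcoB.continuousLinearEquivOfBilin v = S v := fun v =>
    (hcoB.unique_continuousLinearEquivOfBilin (fun w => (hB v w).symm)).symm
  refine isUnit_iff_exists.mpr ⟨(hcoB.continuousLinearEquivOfBilin.symm : H →L[ℝ] H), ?_, ?_⟩
  · ext x
    have := he (hcoB.continuousLinearEquivOfBilin.symm x)
    show S (hcoB.continuousLinearEquivOfBilin.symm x) = x
    rw [← this, hcoB.continuousLinearEquivOfBilin.apply_symm_apply]
  · ext x
    have := he x
    show hcoB.continuousLinearEquivOfBilin.symm (S x) = x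
    rw [← this, hcoB.continuousLinearEquivOfBilin.symm_apply_apply]

lemma sop_inv_cancel (S : H →L[ℝ] H) (hU : IsUnit S) (z : H) :
    S (Ring.inverse S z) = z := by
  have := Ring.mul_inverse_cancel S hU
  calc S (Ring.inverse S z) = (S * Ring.inverse S) z := rfl
    _ = z := by rw [this]; rfl

lemma sop_cancel_inv (S : H →L[ℝ] H) (hU : IsUnit S) (z : H) :
    Ring.inverse S (S z) = z := by
  have := Ring.inverse_mul_cancel S hU
  calc Ring.inverse S (S z) = (Ring.inverse S * S) z := rfl
    _ = z := by rw [this]; rfl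

/-- norm bound: (α+lam)‖S⁻¹y‖ ≤ ‖y‖ -/
lemma sop_inv_norm (A : H →L[ℝ] F) (lam : ℝ) (hlam : 0 < lam)
    (hcoer : ∀ x : H, lam * ‖x‖ ^ 2 ≤ ⟪((ContinuousLinearMap.adjoint A).comp A) x, x⟫)
    (α : ℝ) (hα : 0 < α) (y : H) :
    (α + lam) * ‖tikInv A α y‖ ≤ ‖y‖ := by
  set T := (ContinuousLinearMap.adjoint A).comp A with hT
  set S := α • (1 : H →L[ℝ] H) + T with hS
  have hU := sop_isUnit A lam hlam hcoer α hα
  set x := tikInv A α y with hx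
  have hSx : S x = y := sop_inv_cancel S hU y
  have h2 : ⟪S x, x⟫ = α * ‖x‖ ^ 2 + ⟪T x, x⟫ := by
    simp [hS, ContinuousLinearMap.add_apply, ContinuousLinearMap.smul_apply,
      inner_add_left, real_inner_smul_left, real_inner_self_eq_norm_sq]
  have h3 : (α + lam) * ‖x‖ ^ 2 ≤ ⟪y, x⟫ := by
    rw [← hSx, h2]; nlinarith [hcoer x]
  have h4 : ⟪y, x⟫ ≤ ‖y‖ * ‖x‖ := real_inner_le_norm y x
  rcases eq_or_lt_of_le (norm_nonneg x) with h | h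
  · rw [← h]; simpa using norm_nonneg y
  · nlinarith

lemma resolvent_id (A : H →L[ℝ] F) (lam : ℝ) (hlam : 0 < lam)
    (hcoer : ∀ x : H, lam * ‖x‖ ^ 2 ≤ ⟪((ContinuousLinearMap.adjoint A).comp A) x, x⟫)
    (α' : ℝ) (h1 : 0 < α') (y : H) :
    tikInv A α' y = tikInv A lam y + (lam - α') • tikInv A α' (tikInv A lam y) := by
  set T := (ContinuousLinearMap.adjoint A).comp A with hT
  have hU' := sop_isUnit A lam hlam hcoer α' h1
  have hUL := sop_isUnit A lam hlam hcoer lam hlam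
  have hcan1 : ∀ (β : ℝ), IsUnit (β • (1 : H →L[ℝ] H) + T) → ∀ w : H,
      (β • (1 : H →L[ℝ] H) + T) (tikInv A β w) = w := fun β hU w =>
    sop_inv_cancel _ hU w
  have hcan2 : ∀ (β : ℝ), IsUnit (β • (1 : H →L[ℝ] H) + T) → ∀ w : H,
      tikInv A β ((β • (1 : H →L[ℝ] H) + T) w) = w := fun β hU w =>
    sop_cancel_inv _ hU w
  set z := tikInv A lam y with hz
  have hSLz : (lam • (1 : H →L[ℝ] H) + T) z = y := hcan1 lam hUL y
  have happ : ∀ (β : ℝ) (w : H), (β • (1 : H →L[ℝ] H) + T) w = β • w + T w := by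
    intro β w
    simp [ContinuousLinearMap.add_apply, ContinuousLinearMap.smul_apply]
  have hkey : (α' • (1 : H →L[ℝ] H) + T) (z + (lam - α') • tikInv A α' z) = y := by
    rw [map_add, _root_.map_smul, hcan1 α' hU' z, happ]
    rw [happ] at hSLz
    rw [← hSLz]
    module
  calc tikInv A α' y
      = tikInv A α' ((α' • (1 : H →L[ℝ] H) + T) (z + (lam - α') • tikInv A α' z)) := by
        rw [hkey]
    _ = z + (lam - α') • tikInv A α' z := hcan2 α' hU' _

theorem err_le_two_e1_of_coercive_aux (A : H →L[ℝ] F) (f fstar : F) (ustar : H)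
    (hA : A ustar = fstar) (lam : ℝ) (hlam : 0 < lam)
    (hcoer : ∀ x : H, lam * ‖x‖ ^ 2 ≤ ⟪((ContinuousLinearMap.adjoint A).comp A) x, x⟫)
    (α' : ℝ) (h1 : 0 < α') (h2 : α' ≤ lam) :
    ‖tikSol A f α' - ustar‖ ≤ 2 * (‖tikSol A fstar lam - ustar‖ + ‖tikSol A f lam - tikSol A fstar lam‖) ∧
    ‖tikInv A α' (ContinuousLinearMap.adjoint A (f - fstar))‖ ≤
      2 * ‖tikInv A lam (ContinuousLinearMap.adjoint A (f - fstar))‖ := by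
  set T := (ContinuousLinearMap.adjoint A).comp A with hT
  -- generic factor-2 bound
  have key1 : ∀ y : H, ‖tikInv A α' y‖ ≤ 2 * ‖tikInv A lam y‖ := by
    intro y
    have hid := resolvent_id A lam hlam hcoer α' h1 y
    set z := tikInv A lam y with hz
    have hc : (α' + lam) * ‖tikInv A α' z‖ ≤ ‖z‖ := sop_inv_norm A lam hlam hcoer α' h1 z
    have hc0 : (0:ℝ) ≤ ‖tikInv A α' z‖ := norm_nonneg _
    have : ‖tikInv A α' y‖ ≤ ‖z‖ + (lam - α') * ‖tikInv A α' z‖ := by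
      rw [hid]
      refine le_trans (norm_add_le _ _) ?_
      rw [norm_smul, Real.norm_eq_abs, abs_of_nonneg (by linarith)]
    nlinarith
  -- scaled bound
  have key2 : ∀ y : H, α' * ‖tikInv A α' y‖ ≤ lam * ‖tikInv A lam y‖ := by
    intro y
    have hid := resolvent_id A lam hlam hcoer α' h1 y
    set z := tikInv A lam y with hz
    have hc : (α' + lam) * ‖tikInv A α' z‖ ≤ ‖z‖ := sop_inv_norm A lam hlam hcoer α' h1 z
    have hc0 : (0:ℝ) ≤ ‖tikInv A α' z‖ := norm_nonneg _
    have h3 : ‖tikInv A α' y‖ ≤ ‖z‖ + (lam - α') * ‖tikInv A α' z‖ := by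
      rw [hid]
      refine le_trans (norm_add_le _ _) ?_
      rw [norm_smul, Real.norm_eq_abs, abs_of_nonneg (by linarith)]
    nlinarith [mul_le_mul_of_nonneg_left hc (sub_nonneg.mpr h2),
      mul_le_mul_of_nonneg_left h3 (le_of_lt h1),
      mul_nonneg (mul_nonneg (sub_nonneg.mpr h2) hlam.le) hc0]
  -- bias formula: u_α⁺ - ustar = -(α • tikInv A α ustar)
  have bias : ∀ α : ℝ, 0 < α → tikSol A fstar α - ustar = -(α • tikInv A α ustar) := by
    intro α hα
    have hU := sop_isUnit A lam hlam hcoer α hα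
    set S := α • (1 : H →L[ℝ] H) + T with hS
    have hTu : ContinuousLinearMap.adjoint A fstar = T ustar := by rw [← hA]; rfl
    have hu : ustar = α • tikInv A α ustar + tikInv A α (T ustar) := by
      conv_lhs => rw [← sop_cancel_inv S hU ustar]
      show tikInv A α (S ustar) = _
      have : S ustar = α • ustar + T ustar := by
        simp [hS, ContinuousLinearMap.add_apply, ContinuousLinearMap.smul_apply]
      rw [this, map_add, _root_.map_smul]
    have hts : tikSol A fstar α = tikInv A α (T ustar) := by rw [tikSol, hTu]
    rw [hts]
    nth_rewrite 2 [hu]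
    abel
  have hbias' : ‖tikSol A fstar α' - ustar‖ ≤ ‖tikSol A fstar lam - ustar‖ := by
    rw [bias α' h1, bias lam hlam, norm_neg, norm_neg, norm_smul, norm_smul,
      Real.norm_eq_abs, Real.norm_eq_abs, abs_of_pos h1, abs_of_pos hlam]
    exact key2 ustar
  have hdiff : ∀ α : ℝ, tikSol A f α - tikSol A fstar α =
      tikInv A α (ContinuousLinearMap.adjoint A (f - fstar)) := by
    intro α
    rw [tikSol, tikSol, map_sub, map_sub]
  constructor
  · have htri : ‖tikSol A f α' - ustar‖ ≤ ‖tikSol A fstar α' - ustar‖ +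
        ‖tikSol A f α' - tikSol A fstar α'‖ := by
      linarith [norm_sub_le_norm_sub_add_norm_sub
        (tikSol A f α') (tikSol A fstar α') ustar]
    have hd : ‖tikSol A f α' - tikSol A fstar α'‖ ≤
        2 * ‖tikSol A f lam - tikSol A fstar lam‖ := by
      rw [hdiff α', hdiff lam]; exact key1 _
    have h0 : 0 ≤ ‖tikSol A fstar lam - ustar‖ := norm_nonneg _
    linarith
  · rw [← hdiff α', ← hdiff lam] at *
    rw [hdiff α', hdiff lam]
    exact key1 _

/-- if `A*A` is coercive with constant `λ > 0`, then for every
`0 < α' ≤ λ`, `‖u_{α'} - u_*‖ ≤ 2 e1(λ)`; in particular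
`‖(α'I + A*A)⁻¹ A*(f - f_*)‖ ≤ 2 ‖(λI + A*A)⁻¹ A*(f - f_*)‖`. -/
theorem err_le_two_e1_of_coercive (A : H →L[ℝ] F) (f fstar : F) (ustar : H)
    (hA : A ustar = fstar) (lam : ℝ) (hlam : 0 < lam)
    (hcoer : ∀ x : H, lam * ‖x‖ ^ 2 ≤ ⟪((ContinuousLinearMap.adjoint A).comp A) x, x⟫)
    (α' : ℝ) (h1 : 0 < α') (h2 : α' ≤ lam) :
    ‖tikSol A f α' - ustar‖ ≤ 2 * e1 A f fstar ustar lam ∧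
    ‖tikInv A α' (ContinuousLinearMap.adjoint A (f - fstar))‖ ≤
      2 * ‖tikInv A lam (ContinuousLinearMap.adjoint A (f - fstar))‖ := by
  have h := err_le_two_e1_of_coercive_aux A f fstar ustar hA lam hlam hcoer α' h1 h2
  exact ⟨by rw [e1]; exact h.1, h.2⟩
end
end
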